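/- arXiv:2209.09229 — 4 statements merged into one kernel-verified Lean document; each statement's English description precedes it below -/
import Mathlib

section
/- For every real number a < 0 and every real number w > 0, i^a · E_{1-a}(w) = ∫_{i}^{i+∞} e^{iwz} z^{a-1} dz, where the integral is along the horizontal ray from i to i+∞. -/
/-! `f z = exp (i w z) z^(a-1)` is holomorphic on the quadrant `Re z ≥ 0, Im z ≥ 1` with corner `i`,
and `‖f z‖ = exp (-w Im z) ‖z‖^(a-1)` decays as `Im z → ∞` (because `w > 0`) and as `Re z → ∞`
(because `a < 1`). Cauchy's theorem on the rectangles `[0, R] × [1, T]`, letting first `T → ∞` and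
then `R → ∞`, turns the horizontal ray from `i` into `i` times the vertical ray `z = i t`, `t ≥ 1`.
On the latter `(i t)^(a-1) = i^(a-1) t^(a-1)` for the principal branch since `t > 0`, so
`i f (i t) = i^a e^{-wt} t^{a-1}`, which is `i^a` times the integrand of `E_{1-a}(w)`. -/

open Complex MeasureTheory Set Filter Topology intervalIntegral

section QuadrantContourShift

variable {E : Type*} [NormedAddCommGroup E] [NormedSpace ℂ E] {f : ℂ → E} {x₀ y₀ R : ℝ}

theorem intervalIntegral_horizontal_eq_sub_vertical_rays
    (hf : DifferentiableOn ℂ f (Ici x₀ ×ℂ Ici y₀)) (hR : x₀ ≤ R)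
    (hleft : IntegrableOn (fun y : ℝ => f (x₀ + y * I)) (Ioi y₀))
    (hright : IntegrableOn (fun y : ℝ => f (R + y * I)) (Ioi y₀))
    (htop : Tendsto (fun T : ℝ => ∫ x in x₀..R, f (x + T * I)) atTop (𝓝 0)) :
    ∫ x in x₀..R, f (x + y₀ * I)
      = I • (∫ y in Ioi y₀, f (x₀ + y * I)) - I • ∫ y in Ioi y₀, f (R + y * I) := by
  have hrect : ∀ T, y₀ ≤ T → ∫ x in x₀..R, f (x + y₀ * I)
      = (∫ x in x₀..R, f (x + T * I)) - I • (∫ y in y₀..T, f (R + y * I))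
        + I • ∫ y in y₀..T, f (x₀ + y * I) := by
    intro T hT
    have hsub : uIcc x₀ R ×ℂ uIcc y₀ T ⊆ Ici x₀ ×ℂ Ici y₀ := by
      rw [uIcc_of_le hR, uIcc_of_le hT]
      exact reProdIm_subset_iff.2 (prod_mono Icc_subset_Ici_self Icc_subset_Ici_self)
    have h := integral_boundary_rect_eq_zero_of_differentiableOn f (x₀ + y₀ * I) (R + T * I)
      (by simpa using hf.mono hsub)
    simp only [add_re, ofReal_re, mul_re, I_re, mul_zero, ofReal_im, I_im, mul_one, sub_self,
      add_zero, add_im, mul_im, zero_add] at h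
    rw [← sub_eq_zero, ← h]
    abel
  have hlim :=
    (htop.sub ((intervalIntegral_tendsto_integral_Ioi y₀ hright tendsto_id).const_smul I)).add
      ((intervalIntegral_tendsto_integral_Ioi y₀ hleft tendsto_id).const_smul I)
  have := tendsto_nhds_unique (tendsto_const_nhds.congr' <|
    (eventually_ge_atTop y₀).mono hrect) hlim
  rw [this]
  abel

theorem integral_horizontal_ray_eq_I_smul_vertical_ray
    (hf : DifferentiableOn ℂ f (Ici x₀ ×ℂ Ici y₀))
    (hbottom : IntegrableOn (fun x : ℝ => f (x + y₀ * I)) (Ioi x₀))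
    (hvert : ∀ x, x₀ ≤ x → IntegrableOn (fun y : ℝ => f (x + y * I)) (Ioi y₀))
    (htop : ∀ R, Tendsto (fun T : ℝ => ∫ x in x₀..R, f (x + T * I)) atTop (𝓝 0))
    (hright : Tendsto (fun R : ℝ => ∫ y in Ioi y₀, f (R + y * I)) atTop (𝓝 0)) :
    ∫ x in Ioi x₀, f (x + y₀ * I) = I • ∫ y in Ioi y₀, f (x₀ + y * I) := by
  have hlim := (tendsto_const_nhds (x := I • ∫ y in Ioi y₀, f (x₀ + y * I))).sub
    (hright.const_smul I)
  have := tendsto_nhds_unique (intervalIntegral_tendsto_integral_Ioi x₀ hbottom tendsto_id)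
    (hlim.congr' <| (eventually_ge_atTop x₀).mono fun R hR =>
      (intervalIntegral_horizontal_eq_sub_vertical_rays hf hR (hvert x₀ le_rfl) (hvert R hR)
        (htop R)).symm)
  rwa [smul_zero, sub_zero] at this

end QuadrantContourShift

theorem ofReal_mul_cpow {r : ℝ} (hr : 0 ≤ r) (z s : ℂ) :
    ((r : ℂ) * z) ^ s = (r : ℂ) ^ s * z ^ s := by
  rcases hr.eq_or_lt with rfl | hr
  · rcases eq_or_ne s 0 with rfl | hs <;> simp [zero_cpow, *]
  rcases eq_or_ne z 0 with rfl | hz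
  · rcases eq_or_ne s 0 with rfl | hs <;> simp [zero_cpow, *]
  have hr' : (r : ℂ) ≠ 0 := by exact_mod_cast hr.ne'
  rw [cpow_def_of_ne_zero (mul_ne_zero hr' hz), cpow_def_of_ne_zero hr', cpow_def_of_ne_zero hz,
    log_ofReal_mul hr hz, ← exp_add, ofReal_log hr.le, add_mul]

section ExpCpow

variable {a w : ℝ}

theorem norm_cexp_I_mul_mul_cpow {z : ℂ} (hz : z ≠ 0) :
    ‖cexp (I * w * z) * z ^ ((a : ℂ) - 1)‖ = Real.exp (-(w * z.im)) * ‖z‖ ^ (a - 1) := by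
  rw [norm_mul, norm_exp, norm_cpow_of_ne_zero hz]
  simp [mul_re, mul_im]

theorem norm_cexp_I_mul_mul_cpow_le (ha : a ≤ 1) {z : ℂ} {r : ℝ} (hr : 0 < r) (hrz : r ≤ ‖z‖) :
    ‖cexp (I * w * z) * z ^ ((a : ℂ) - 1)‖ ≤ Real.exp (-(w * z.im)) * r ^ (a - 1) := by
  rw [norm_cexp_I_mul_mul_cpow (norm_pos_iff.1 (hr.trans_le hrz))]
  exact mul_le_mul_of_nonneg_left (Real.rpow_le_rpow_of_nonpos hr hrz (by linarith))
    (Real.exp_nonneg _)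

theorem differentiableOn_cexp_I_mul_mul_cpow :
    DifferentiableOn ℂ (fun z => cexp (I * w * z) * z ^ ((a : ℂ) - 1)) slitPlane :=
  fun _ hz => ((differentiableAt_id.const_mul _).cexp.mul
    (differentiableAt_id.cpow_const hz)).differentiableWithinAt

theorem integrable_cexp_I_mul_mul_cpow_horizontal (ha : a < 0) :
    Integrable fun x : ℝ => cexp (I * w * (x + I)) * (x + I) ^ ((a : ℂ) - 1) := by
  have hnorm : (fun x : ℝ => ‖cexp (I * w * (x + I)) * (x + I) ^ ((a : ℂ) - 1)‖)
      = fun x => Real.exp (-w) * (1 + ‖x‖ ^ 2) ^ (-(1 - a) / 2) := by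
    ext x
    have hx : (x : ℂ) + I = x + (1 : ℝ) * I := by simp
    rw [hx, norm_cexp_I_mul_mul_cpow (by simp [Complex.ext_iff]), norm_add_mul_I,
      Real.sqrt_eq_rpow, ← Real.rpow_mul (by positivity)]
    simp only [add_im, ofReal_im, mul_im, ofReal_re, I_im, mul_one, I_re, mul_zero, add_zero,
      zero_add, one_pow, Real.norm_eq_abs, sq_abs]
    ring_nf
  refine (integrable_norm_iff (by fun_prop)).1 ?_
  rw [hnorm]
  exact (integrable_rpow_neg_one_add_norm_sq (by simp; linarith)).const_mul _

theorem integrableOn_cexp_I_mul_mul_cpow_vertical (hw : 0 < w) (ha : a ≤ 1) (x : ℝ) :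
    IntegrableOn (fun y : ℝ => cexp (I * w * (x + y * I)) * (x + y * I) ^ ((a : ℂ) - 1))
      (Ioi 1) := by
  refine Integrable.mono' (exp_neg_integrableOn_Ioi 1 hw) (by fun_prop) ?_
  filter_upwards [ae_restrict_mem measurableSet_Ioi] with y (hy : 1 < y)
  have him : ((x : ℂ) + y * I).im = y := by simp
  have h := norm_cexp_I_mul_mul_cpow_le (w := w) ha one_pos (hy.le.trans (him ▸ im_le_norm _))
  rwa [him, Real.one_rpow, mul_one, ← neg_mul] at h

theorem tendsto_intervalIntegral_cexp_I_mul_mul_cpow_top (hw : 0 < w) (ha : a ≤ 1) (x₀ R : ℝ) :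
    Tendsto (fun T : ℝ => ∫ x in x₀..R, cexp (I * w * (x + T * I)) * (x + T * I) ^ ((a : ℂ) - 1))
      atTop (𝓝 0) := by
  have hexp : Tendsto (fun T : ℝ => Real.exp (-(w * T))) atTop (𝓝 0) :=
    Real.tendsto_exp_atBot.comp <| tendsto_neg_atTop_atBot.comp <| tendsto_id.const_mul_atTop hw
  refine squeeze_zero_norm' ?_ (by simpa using hexp.mul_const |R - x₀|)
  filter_upwards [eventually_ge_atTop 1] with T hT
  refine norm_integral_le_of_norm_le_const fun x _ => ?_
  have him : ((x : ℂ) + T * I).im = T := by simp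
  have h := norm_cexp_I_mul_mul_cpow_le (w := w) ha one_pos (hT.trans (him ▸ im_le_norm _))
  rwa [him, Real.one_rpow, mul_one] at h

theorem tendsto_integral_cexp_I_mul_mul_cpow_right (hw : 0 < w) (ha : a < 1) :
    Tendsto
      (fun R : ℝ => ∫ y in Ioi (1 : ℝ), cexp (I * w * (R + y * I)) * (R + y * I) ^ ((a : ℂ) - 1))
      atTop (𝓝 0) := by
  have hpow : Tendsto (fun R : ℝ => R ^ (a - 1) * ∫ y in Ioi (1 : ℝ), Real.exp (-w * y))
      atTop (𝓝 0) := by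
    simpa using (tendsto_rpow_neg_atTop (y := 1 - a) (by linarith)).mul_const
      (∫ y in Ioi (1 : ℝ), Real.exp (-w * y))
  refine squeeze_zero_norm' ?_ hpow
  filter_upwards [eventually_gt_atTop 0] with R hR
  rw [← MeasureTheory.integral_const_mul]
  refine norm_integral_le_of_norm_le ((exp_neg_integrableOn_Ioi 1 hw).const_mul _) ?_
  refine Eventually.of_forall fun y => ?_
  have hre : ((R : ℂ) + y * I).re = R := by simp
  have him : ((R : ℂ) + y * I).im = y := by simp
  have h := norm_cexp_I_mul_mul_cpow_le (w := w) ha.le hR (hre ▸ re_le_norm _)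
  rwa [him, mul_comm (Real.exp _), ← neg_mul] at h

theorem integral_cexp_I_mul_mul_cpow_horizontal_ray (ha : a < 0) (hw : 0 < w) :
    ∫ u in Ioi (0 : ℝ), cexp (I * w * (I + u)) * (I + u) ^ ((a : ℂ) - 1)
      = I * ∫ y in Ioi (1 : ℝ), cexp (I * w * (y * I)) * (y * I) ^ ((a : ℂ) - 1) := by
  have hdiff : DifferentiableOn ℂ (fun z => cexp (I * w * z) * z ^ ((a : ℂ) - 1))
      (Ici 0 ×ℂ Ici 1) :=
    differentiableOn_cexp_I_mul_mul_cpow.mono fun z hz =>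
      mem_slitPlane_iff.2 (Or.inr (zero_lt_one.trans_le hz.2).ne')
  have h := integral_horizontal_ray_eq_I_smul_vertical_ray hdiff
    (by simpa using (integrable_cexp_I_mul_mul_cpow_horizontal (w := w) ha).integrableOn)
    (fun x _ => integrableOn_cexp_I_mul_mul_cpow_vertical hw (by linarith) x)
    (tendsto_intervalIntegral_cexp_I_mul_mul_cpow_top hw (by linarith) 0)
    (tendsto_integral_cexp_I_mul_mul_cpow_right hw (by linarith))
  simpa [add_comm] using h

theorem integral_cexp_I_mul_mul_cpow_vertical_ray :
    ∫ y in Ioi (1 : ℝ), cexp (I * w * (y * I)) * (y * I) ^ ((a : ℂ) - 1)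
      = I ^ ((a : ℂ) - 1) *
        ∫ t in Ioi (1 : ℝ), cexp (-(w : ℂ) * t) * (t : ℂ) ^ (-(1 - (a : ℂ))) := by
  rw [← MeasureTheory.integral_const_mul]
  refine setIntegral_congr_fun measurableSet_Ioi fun y hy => ?_
  have hexp : I * w * (y * I) = -(w : ℂ) * y := by linear_combination (w * y : ℂ) * I_sq
  rw [hexp, ofReal_mul_cpow (zero_lt_one.trans hy).le, neg_sub]
  ring

end ExpCpow

/-- Lemma (bend), boundary case: for `a < 0` and real `w > 0`,
`i^a · E_{1-a}(w) = ∫_i^{i+∞} e^{iwz} z^{a-1} dz`. -/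
theorem bend_lemma_real (a w : ℝ) (ha : a < 0) (hw : 0 < w) :
    Complex.I ^ (a:ℂ) *
        (∫ t in Ioi (1:ℝ), Complex.exp (-(w:ℂ) * t) * (t:ℂ) ^ (-(1 - (a:ℂ))))
      = ∫ u in Ioi (0:ℝ), Complex.exp (Complex.I * w * (Complex.I + u)) *
          (Complex.I + (u:ℂ)) ^ ((a:ℂ) - 1) := by
  rw [integral_cexp_I_mul_mul_cpow_horizontal_ray ha hw, integral_cexp_I_mul_mul_cpow_vertical_ray,
    ← mul_assoc, cpow_sub _ _ I_ne_zero, cpow_one, mul_div_cancel₀ _ I_ne_zero]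
end

section
/- For every complex z with Re(z) > 0 and every p ∈ C \ N, the generalized exponential integral satisfies E_p(z) = z^{p-1} Γ(1-p) − ∑_{k≥0} (−z)^k / (k! (1−p+k)), where the series converges absolutely for all z. -/
/-!
For `Re p < 1`, `E_p(z)` is the Gamma integral `∫₀^∞ e^{-zt} t^{-p} dt = z^{p-1} Γ(1-p)`
(Euler's integral for real `z > 0`, continued analytically to `Re z > 0`) minus
`∫₀¹ e^{-zt} t^{-p} dt`, and expanding `e^{-zt}` and integrating termwise turns the latter into
the series.
Integration by parts gives `(1-p) E_p(z) = z E_{p-1}(z) - e^{-z}`. The right-hand side of the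
formula satisfies the same recurrence (by `Γ(2-p) = (1-p) Γ(1-p)` and an index shift in the
series), so induction on `⌈Re p⌉` reaches every `p` that is not a positive integer.
-/

open Complex MeasureTheory Set Filter Topology
open scoped Nat

lemma integrableOn_exp_neg_mul_mul_rpow {b s : ℝ} (hb : 0 < b) (hs : -1 < s) :
    IntegrableOn (fun t : ℝ => Real.exp (-b * t) * t ^ s) (Ioi 0) := by
  simpa [mul_comm] using integrableOn_rpow_mul_exp_neg_mul_rpow hs zero_lt_one hb

lemma integral_Ioc_zero_one_cpow {s : ℂ} (hs : -1 < s.re) :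
    ∫ t in Ioc (0 : ℝ) 1, (t : ℂ) ^ s = 1 / (s + 1) := by
  have hs' : s + 1 ≠ 0 := fun h => by
    have := congrArg re h
    simp at this
    linarith
  rw [← intervalIntegral.integral_of_le zero_le_one, integral_cpow (Or.inl hs)]
  simp [zero_cpow hs']

lemma integral_Ioc_zero_one_rpow {s : ℝ} (hs : -1 < s) :
    ∫ t in Ioc (0 : ℝ) 1, t ^ s = 1 / (s + 1) := by
  rw [← intervalIntegral.integral_of_le zero_le_one, integral_rpow (Or.inl hs),
    Real.zero_rpow (by linarith)]
  simp

namespace ExpIntegral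

noncomputable def integrand (p z : ℂ) (t : ℝ) : ℂ := cexp (-z * t) * (t : ℂ) ^ (-p)

noncomputable def integrandTerm (p z : ℂ) (k : ℕ) (t : ℝ) : ℂ :=
  (-z) ^ k / (k ! : ℂ) * (t : ℂ) ^ ((k : ℂ) - p)

noncomputable def seriesTerm (p z : ℂ) (k : ℕ) : ℂ := (-z) ^ k / ((k ! : ℂ) * (1 - p + k))

noncomputable def gammaSeriesForm (p z : ℂ) : ℂ :=
  z ^ (p - 1) * Gamma (1 - p) - ∑' k, seriesTerm p z k

variable {p z : ℂ}

lemma norm_integrand {t : ℝ} (ht : 0 < t) :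
    ‖integrand p z t‖ = Real.exp (-z.re * t) * t ^ (-p.re) := by
  simp [integrand, norm_cpow_eq_rpow_re_of_pos ht, Complex.norm_exp]

lemma continuousOn_integrand : ContinuousOn (integrand p z) (Ioi 0) := fun t ht =>
  ((continuous_exp.comp (by fun_prop)).continuousAt.mul
    (continuousAt_ofReal_cpow_const _ _ (Or.inr (ne_of_gt ht)))).continuousWithinAt

lemma integrableOn_integrand_of_rpow_le {s : Set ℝ} (hs : s ⊆ Ioi 0) (hsm : MeasurableSet s)
    {q : ℝ} (hq : -1 < q) (hz : 0 < z.re) (hbound : ∀ t ∈ s, t ^ (-p.re) ≤ t ^ q) :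
    IntegrableOn (integrand p z) s := by
  refine ((integrableOn_exp_neg_mul_mul_rpow hz hq).mono_set hs).mono'
    ((continuousOn_integrand.mono hs).aestronglyMeasurable hsm) ?_
  filter_upwards [ae_restrict_mem hsm] with t ht
  rw [norm_integrand (hs ht)]
  exact mul_le_mul_of_nonneg_left (hbound t ht) (Real.exp_pos _).le

lemma integrableOn_Ioi_zero (hz : 0 < z.re) (hp : p.re < 1) :
    IntegrableOn (integrand p z) (Ioi 0) :=
  integrableOn_integrand_of_rpow_le subset_rfl measurableSet_Ioi (by linarith) hz fun _ _ => le_rfl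

lemma integrableOn_Ioi_one (hz : 0 < z.re) : IntegrableOn (integrand p z) (Ioi 1) :=
  integrableOn_integrand_of_rpow_le (Ioi_subset_Ioi zero_le_one) measurableSet_Ioi
    (neg_one_lt_zero.trans_le (le_max_right (-p.re) 0)) hz fun _ ht =>
      Real.rpow_le_rpow_of_exponent_le (le_of_lt ht) (le_max_left _ _)

lemma hasSum_pow_div_factorial_cexp (w : ℂ) : HasSum (fun k => w ^ k / (k ! : ℂ)) (cexp w) := by
  rw [exp_eq_exp_ℂ]
  exact NormedSpace.expSeries_div_hasSum_exp w

lemma summable_norm_seriesTerm (p z : ℂ) : Summable fun k => ‖seriesTerm p z k‖ := by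
  refine .of_norm_bounded_eventually_nat (Real.summable_pow_div_factorial ‖z‖) ?_
  filter_upwards [eventually_ge_atTop ⌈‖1 - p‖ + 1⌉₊] with k hk
  have hk : 1 ≤ ‖1 - p + k‖ := by
    have := norm_sub_norm_le (k : ℂ) (-(1 - p))
    rw [norm_natCast, norm_neg, sub_neg_eq_add, add_comm] at this
    linarith [Nat.ceil_le.mp hk]
  rw [norm_norm, seriesTerm, norm_div, norm_mul, norm_pow, norm_neg, norm_natCast]
  exact div_le_div_of_nonneg_left (by positivity) (by positivity)
    (le_mul_of_one_le_right (by positivity) hk)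

lemma summable_seriesTerm (p z : ℂ) : Summable (seriesTerm p z) :=
  (summable_norm_seriesTerm p z).of_norm

lemma seriesTerm_succ (hp : ∀ k : ℕ, 1 - p + k ≠ 0) (k : ℕ) :
    (-z) ^ (k + 1) / ((k + 1) ! : ℂ) - (1 - p) * seriesTerm p z (k + 1) =
      -z * seriesTerm (p - 1) z k := by
  have hk : (1 : ℂ) - p + (k + 1 : ℕ) ≠ 0 := hp (k + 1)
  have hk' : (1 : ℂ) - (p - 1) + k ≠ 0 := by
    convert hk using 1; push_cast; ring
  simp only [seriesTerm, Nat.factorial_succ, pow_succ]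
  push_cast at hk ⊢
  field_simp
  ring

lemma one_sub_mul_tsum_seriesTerm (hp : ∀ k : ℕ, 1 - p + k ≠ 0) :
    (1 - p) * ∑' k, seriesTerm p z k = cexp (-z) + z * ∑' k, seriesTerm (p - 1) z k := by
  set g : ℕ → ℂ := fun k => (-z) ^ k / (k ! : ℂ) - (1 - p) * seriesTerm p z k
  have hg : HasSum g (cexp (-z) - (1 - p) * ∑' k, seriesTerm p z k) :=
    (hasSum_pow_div_factorial_cexp (-z)).sub ((summable_seriesTerm p z).hasSum.mul_left _)
  have hg0 : g 0 = 0 := by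
    have : (1 : ℂ) - p ≠ 0 := by simpa using hp 0
    simp [g, seriesTerm, this]
  have hg' : HasSum (fun k => g (k + 1)) (-z * ∑' k, seriesTerm (p - 1) z k) := by
    simp only [g, seriesTerm_succ hp]
    exact (summable_seriesTerm (p - 1) z).hasSum.mul_left _
  have := (hasSum_nat_add_iff 1).mp hg'
  simp only [Finset.range_one, Finset.sum_singleton, hg0, add_zero] at this
  linear_combination this.unique hg

lemma hasSum_integrandTerm {t : ℝ} (ht : 0 < t) :
    HasSum (fun k => integrandTerm p z k t) (integrand p z t) := by
  have ht' : (t : ℂ) ≠ 0 := ofReal_ne_zero.mpr ht.ne'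
  refine ((hasSum_pow_div_factorial_cexp (-z * t)).mul_right ((t : ℂ) ^ (-p))).congr_fun
    fun k => ?_
  rw [integrandTerm, sub_eq_add_neg, cpow_add _ _ ht', cpow_natCast, mul_pow]
  ring

lemma neg_one_lt_re_natCast_sub (hp : p.re < 1) (k : ℕ) : -1 < ((k : ℂ) - p).re := by
  simp only [sub_re, natCast_re]
  linarith [(k.cast_nonneg : (0 : ℝ) ≤ k)]

lemma integral_Ioc_zero_one_integrandTerm (hp : p.re < 1) (k : ℕ) :
    ∫ t in Ioc (0 : ℝ) 1, integrandTerm p z k t = seriesTerm p z k := by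
  simp only [integrandTerm]
  rw [integral_const_mul, integral_Ioc_zero_one_cpow (neg_one_lt_re_natCast_sub hp k), seriesTerm]
  simp only [div_eq_mul_inv, mul_inv]
  ring

lemma integral_Ioc_zero_one_norm_integrandTerm (hp : p.re < 1) (k : ℕ) :
    ∫ t in Ioc (0 : ℝ) 1, ‖integrandTerm p z k t‖ = ‖z‖ ^ k / k ! / (k - p.re + 1) := by
  rw [setIntegral_congr_fun measurableSet_Ioc fun t ht => by
    rw [integrandTerm, norm_mul, norm_cpow_eq_rpow_re_of_pos ht.1, norm_div, norm_pow, norm_neg,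
      norm_natCast, sub_re, natCast_re], integral_const_mul,
    integral_Ioc_zero_one_rpow (by simpa using neg_one_lt_re_natCast_sub hp k), mul_one_div]

lemma integral_Ioc_zero_one_integrand (hp : p.re < 1) :
    ∫ t in Ioc (0 : ℝ) 1, integrand p z t = ∑' k, seriesTerm p z k := by
  have hint (k : ℕ) : IntegrableOn (integrandTerm p z k) (Ioc 0 1) :=
    (intervalIntegral.intervalIntegrable_cpow' (neg_one_lt_re_natCast_sub hp k)).1.const_mul _
  have hsum : Summable fun k => ∫ t in Ioc (0 : ℝ) 1, ‖integrandTerm p z k t‖ := by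
    refine .of_nonneg_of_le (fun k => integral_nonneg fun _ => norm_nonneg _) (fun k => ?_)
      ((Real.summable_pow_div_factorial ‖z‖).div_const (1 - p.re))
    rw [integral_Ioc_zero_one_norm_integrandTerm hp k]
    gcongr
    linarith [(k.cast_nonneg : (0 : ℝ) ≤ k)]
  rw [← tsum_congr (integral_Ioc_zero_one_integrandTerm hp),
    integral_tsum_of_summable_integral_norm hint hsum]
  exact setIntegral_congr_fun measurableSet_Ioc fun t ht =>
    (hasSum_integrandTerm ht.1).tsum_eq.symm

lemma hasDerivAt_integrand_param {t : ℝ} (ht : 0 < t) (w : ℂ) :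
    HasDerivAt (fun w => integrand p w t) (-integrand (p - 1) w t) w := by
  have ht' : (t : ℂ) ≠ 0 := ofReal_ne_zero.mpr ht.ne'
  have hcpow : (t : ℂ) ^ (-(p - 1)) = t * (t : ℂ) ^ (-p) := by
    rw [neg_sub, sub_eq_add_neg, cpow_add _ _ ht', cpow_one]
  have hexp := ((hasDerivAt_id w).neg.mul_const (t : ℂ)).cexp
  refine (hexp.mul_const ((t : ℂ) ^ (-p))).congr_deriv ?_
  simp only [integrand, hcpow, Pi.neg_apply, id_eq]
  ring

lemma differentiableOn_integral_Ioi_zero_integrand (hp : p.re < 1) :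
    DifferentiableOn ℂ (fun w => ∫ t in Ioi (0 : ℝ), integrand p w t) {w | 0 < w.re} := by
  intro z₀ (hz₀ : 0 < z₀.re)
  have hs : {w : ℂ | z₀.re / 2 < w.re} ∈ 𝓝 z₀ :=
    (isOpen_lt continuous_const continuous_re).mem_nhds (show z₀.re / 2 < z₀.re by linarith)
  refine (hasDerivAt_integral_of_dominated_loc_of_deriv_le (μ := volume.restrict (Ioi 0))
    (F := fun w t => integrand p w t)
    (F' := fun w t => -integrand (p - 1) w t)
    (bound := fun t => Real.exp (-(z₀.re / 2) * t) * t ^ (-(p - 1).re)) hs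
    (.of_forall fun w => continuousOn_integrand.aestronglyMeasurable measurableSet_Ioi)
    (integrableOn_Ioi_zero hz₀ hp)
    (continuousOn_integrand.neg.aestronglyMeasurable measurableSet_Ioi) ?_
    (integrableOn_exp_neg_mul_mul_rpow (by linarith) (by simp; linarith)) ?_).2.differentiableAt
    |>.differentiableWithinAt
  · filter_upwards [ae_restrict_mem measurableSet_Ioi] with t (ht : 0 < t) w hw
    rw [norm_neg, norm_integrand ht]
    gcongr
  · filter_upwards [ae_restrict_mem measurableSet_Ioi] with t ht w _
    exact hasDerivAt_integrand_param ht w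

lemma integral_Ioi_zero_integrand_ofReal (hp : p.re < 1) {r : ℝ} (hr : 0 < r) :
    ∫ t in Ioi (0 : ℝ), integrand p r t = (r : ℂ) ^ (p - 1) * Gamma (1 - p) := by
  have h := integral_cpow_mul_exp_neg_mul_Ioi (a := 1 - p) (by simp; linarith) hr
  have harg : (r : ℂ).arg ≠ Real.pi := by
    rw [arg_ofReal_of_nonneg hr.le]; exact Real.pi_ne_zero.symm
  rw [one_div, inv_cpow _ _ harg, ← cpow_neg, neg_sub, sub_sub_cancel_left] at h
  rw [← h]
  congr 1 with t
  simp only [integrand]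
  ring_nf

lemma integral_Ioi_zero_integrand (hp : p.re < 1) (hz : 0 < z.re) :
    ∫ t in Ioi (0 : ℝ), integrand p z t = z ^ (p - 1) * Gamma (1 - p) := by
  have hU : IsOpen {w : ℂ | 0 < w.re} := isOpen_lt continuous_const continuous_re
  have hG : DifferentiableOn ℂ (fun w : ℂ => w ^ (p - 1) * Gamma (1 - p)) {w | 0 < w.re} :=
    fun w hw => ((differentiableAt_id.cpow_const (Or.inl hw)).mul_const _).differentiableWithinAt
  have hreal : Tendsto ((↑) : ℝ → ℂ) (𝓝[≠] 1) (𝓝[≠] 1) :=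
    continuous_ofReal.continuousWithinAt.tendsto_nhdsWithin fun _ h => by simpa using h
  refine ((differentiableOn_integral_Ioi_zero_integrand hp).analyticOnNhd hU)
    |>.eqOn_of_preconnected_of_frequently_eq (hG.analyticOnNhd hU)
      (convex_halfSpace_re_gt 0).isPreconnected (show 0 < (1 : ℂ).re by simp) ?_ hz
  refine hreal.frequently (Eventually.frequently ?_)
  filter_upwards [nhdsWithin_le_nhds (eventually_gt_nhds zero_lt_one)] with r hr
  exact integral_Ioi_zero_integrand_ofReal hp hr

lemma hasDerivAt_integrand {t : ℝ} (ht : 0 < t) :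
    HasDerivAt (integrand p z) (-z * integrand p z t - p * integrand (p + 1) z t) t := by
  have hexp := (((hasDerivAt_id (t : ℂ)).const_mul (-z)).cexp).comp_ofReal
  have hpow :=
    ((hasDerivAt_id (t : ℂ)).cpow_const (c := -p) (ofReal_mem_slitPlane.2 ht)).comp_ofReal
  refine (hexp.mul hpow).congr_deriv ?_
  simp only [integrand, id_eq, mul_one, show -p - 1 = -(p + 1) by ring]
  ring

lemma tendsto_integrand_atTop (hz : 0 < z.re) : Tendsto (integrand p z) atTop (𝓝 0) := by
  rw [tendsto_zero_iff_norm_tendsto_zero]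
  refine (tendsto_rpow_mul_exp_neg_mul_atTop_nhds_zero (-p.re) z.re hz).congr' ?_
  filter_upwards [eventually_gt_atTop 0] with t ht
  rw [norm_integrand ht, mul_comm]

lemma one_sub_mul_integral_Ioi_one_integrand (hz : 0 < z.re) :
    (1 - p) * ∫ t in Ioi (1 : ℝ), integrand p z t =
      z * (∫ t in Ioi (1 : ℝ), integrand (p - 1) z t) - cexp (-z) := by
  have hderiv (t : ℝ) (ht : t ∈ Ici 1) : HasDerivAt (integrand (p - 1) z)
      (-z * integrand (p - 1) z t - (p - 1) * integrand p z t) t := by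
    simpa using hasDerivAt_integrand (p := p - 1) (z := z) (zero_lt_one.trans_le ht)
  have hint : IntegrableOn (fun t => -z * integrand (p - 1) z t - (p - 1) * integrand p z t)
      (Ioi 1) :=
    ((integrableOn_Ioi_one hz).const_mul _).sub ((integrableOn_Ioi_one hz).const_mul _)
  have := integral_Ioi_of_hasDerivAt_of_tendsto' hderiv hint (tendsto_integrand_atTop hz)
  rw [integral_sub ((integrableOn_Ioi_one hz).const_mul _) ((integrableOn_Ioi_one hz).const_mul _),
    integral_const_mul, integral_const_mul] at this
  have hone : integrand (p - 1) z 1 = cexp (-z) := by simp [integrand]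
  rw [hone] at this
  linear_combination this

lemma integral_Ioi_one_integrand_of_re_lt_one (hz : 0 < z.re) (hp : p.re < 1) :
    ∫ t in Ioi (1 : ℝ), integrand p z t = gammaSeriesForm p z := by
  have hsplit := setIntegral_union (Ioc_disjoint_Ioi le_rfl) measurableSet_Ioi
    ((integrableOn_Ioi_zero hz hp).mono_set Ioc_subset_Ioi_self) (integrableOn_Ioi_one hz)
  rw [Ioc_union_Ioi_eq_Ioi zero_le_one, integral_Ioi_zero_integrand hp hz,
    integral_Ioc_zero_one_integrand hp] at hsplit
  rw [gammaSeriesForm, hsplit]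
  ring

lemma one_sub_mul_gammaSeriesForm (hz : z ≠ 0) (hp : ∀ k : ℕ, 1 - p + k ≠ 0) :
    (1 - p) * gammaSeriesForm p z = z * gammaSeriesForm (p - 1) z - cexp (-z) := by
  have hGamma : Gamma (1 - (p - 1)) = (1 - p) * Gamma (1 - p) := by
    rw [show 1 - (p - 1) = (1 - p) + 1 by ring, Gamma_add_one _ (by simpa using hp 0)]
  have hpow : z ^ (p - 1) = z * z ^ (p - 1 - 1) := by
    conv_lhs => rw [show p - 1 = 1 + (p - 1 - 1) by ring]
    rw [cpow_add _ _ hz, cpow_one]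
  rw [gammaSeriesForm, gammaSeriesForm, mul_sub, one_sub_mul_tsum_seriesTerm hp, hGamma, hpow]
  ring

lemma integral_Ioi_one_integrand (hz : 0 < z.re) (hp : ∀ k : ℕ, 1 - p + k ≠ 0) :
    ∫ t in Ioi (1 : ℝ), integrand p z t = gammaSeriesForm p z := by
  obtain ⟨n, hn⟩ := exists_nat_gt p.re
  induction n generalizing p with
  | zero => exact integral_Ioi_one_integrand_of_re_lt_one hz (by simp at hn; linarith)
  | succ n ih =>
    have hp' (k : ℕ) : 1 - (p - 1) + k ≠ 0 := by
      convert hp (k + 1) using 1; push_cast; ring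
    have h1p : 1 - p ≠ 0 := by simpa using hp 0
    have hz0 : z ≠ 0 := fun h => by simp [h] at hz
    refine mul_left_cancel₀ h1p ?_
    rw [one_sub_mul_integral_Ioi_one_integrand hz, ih hp' (by simp; push_cast at hn; linarith),
      one_sub_mul_gammaSeriesForm hz0 hp]

end ExpIntegral

/-- Series expansion of the generalized exponential integral `E_p(z)` for `p` not a positive
integer: `E_p(z) = z^{p-1} Γ(1-p) − ∑_{k≥0} (−z)^k/(k!(1−p+k))`, the series converging
absolutely. -/
theorem Ep_series_nonintegral (p z : ℂ) (hz : 0 < z.re) (hp : ∀ n : ℕ, p ≠ (n:ℂ) + 1) :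
    Summable (fun k : ℕ => ‖(-z) ^ k / ((k.factorial : ℂ) * (1 - p + k))‖) ∧
    (∫ t in Ioi (1:ℝ), Complex.exp (-z * t) * (t:ℂ) ^ (-p))
      = z ^ (p - 1) * Complex.Gamma (1 - p)
        - ∑' k : ℕ, (-z) ^ k / ((k.factorial : ℂ) * (1 - p + k)) :=
  ⟨ExpIntegral.summable_norm_seriesTerm p z,
    ExpIntegral.integral_Ioi_one_integrand hz fun k h => hp k (by linear_combination -h)⟩
end

section
/- Let f : H → C be holomorphic, 1-periodic, with absolutely convergent Fourier expansion f(z) = ∑_{n ≥ −n₀, n ≠ 0} a(n) e^{2πinz}, and let x > 0, s ∈ R, N ≥ 1. Then ∫_{i/√N}^{i/√N + ∞} e^{−xz} f(z) z^{s−1} dz = ∫_{i/√N}^{i/√N + 1} e^{−xz} f(z) ζ(1−s, ix/(2π), z) dz, where ζ(s, a, z) = ∑_{m≥0} e^{2πima} (z+m)^{−s} is the Lerch zeta function. -/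
/-!
Cut the ray into the unit intervals `[m, m + 1]` and translate each one back to `[0, 1]`. On the
horizontal line `f` is `1`-periodic, and the exponential factor picks up
`e^{-xm} = e^{2πim · ix/(2π)}`, so the folded integrand is `e^{-xz} f(z)` times the Lerch series.
Summing and integrating may be interchanged because the ray integrand is absolutely integrable:
`f` is bounded on the line (continuous and periodic), while `z^{s-1}` grows only polynomially
against the exponential decay of `e^{-xz}`.
-/

open Complex MeasureTheory Set Filter Asymptotics Function

theorem iUnion_Ioc_natCast_add_one : ⋃ m : ℕ, Ioc (m : ℝ) (m + 1) = Ioi 0 := by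
  ext u
  simp only [mem_iUnion, mem_Ioc, mem_Ioi]
  refine ⟨fun ⟨m, hm, _⟩ => (Nat.cast_nonneg m).trans_lt hm,
    fun hu => ⟨⌈u⌉₊ - 1, ?_⟩⟩
  have h1 : 1 ≤ ⌈u⌉₊ := Nat.one_le_iff_ne_zero.mpr (Nat.ceil_pos.mpr hu).ne'
  rw [Nat.cast_sub h1, Nat.cast_one]
  constructor <;> linarith [Nat.ceil_lt_add_one hu.le, Nat.le_ceil u]

theorem pairwise_disjoint_Ioc_natCast :
    Pairwise (Disjoint on fun m : ℕ => Ioc (m : ℝ) (m + 1)) := by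
  intro i j hij
  simpa using pairwise_disjoint_Ioc_intCast ℝ (Int.natCast_inj.not.2 hij)

section Folding

variable {E : Type*} [NormedAddCommGroup E] {g : ℝ → E}

theorem MeasureTheory.IntegrableOn.intervalIntegrable_comp_add_nat (hg : IntegrableOn g (Ioi 0))
    (m : ℕ) : IntervalIntegrable (fun u => g (u + m)) volume 0 1 := by
  have : IntervalIntegrable g volume m (m + 1) :=
    (intervalIntegrable_iff_integrableOn_Ioc_of_le (by linarith)).2 <|
      hg.mono_set fun u hu => (Nat.cast_nonneg m).trans_lt hu.1
  simpa using this.comp_add_right m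

variable [NormedSpace ℝ E]

theorem MeasureTheory.IntegrableOn.hasSum_intervalIntegral_comp_add_nat
    (hg : IntegrableOn g (Ioi 0)) :
    HasSum (fun m : ℕ => ∫ u in (0 : ℝ)..1, g (u + m)) (∫ u in Ioi 0, g u) := by
  simp_rw [intervalIntegral.integral_comp_add_right, zero_add, add_comm (1 : ℝ),
    intervalIntegral.integral_of_le (le_add_of_nonneg_right zero_le_one)]
  rw [← iUnion_Ioc_natCast_add_one] at hg ⊢
  exact hasSum_integral_iUnion (fun _ => measurableSet_Ioc) pairwise_disjoint_Ioc_natCast hg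

theorem MeasureTheory.IntegrableOn.integral_Ioi_eq_intervalIntegral_tsum_comp_add_nat
    (hg : IntegrableOn g (Ioi 0)) :
    ∫ u in Ioi 0, g u = ∫ u in (0 : ℝ)..1, ∑' m : ℕ, g (u + m) := by
  have hsum := IntegrableOn.hasSum_intervalIntegral_comp_add_nat
    (g := fun u => ‖g u‖) hg.norm |>.summable
  simp_rw [intervalIntegral.integral_of_le zero_le_one] at hsum ⊢
  rw [← hg.hasSum_intervalIntegral_comp_add_nat.tsum_eq]
  simp_rw [intervalIntegral.integral_of_le zero_le_one]
  exact integral_tsum_of_summable_integral_norm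
    (fun m => (hg.intervalIntegrable_comp_add_nat m).1) hsum

end Folding

namespace Complex

theorem isBigO_const_add_ofReal_cpow_atTop (c b : ℂ) :
    (fun u : ℝ => (c + u) ^ b) =O[atTop] fun u => u ^ b.re := by
  have hequiv : (fun u : ℝ => c + u) ~[atTop] fun u => (u : ℂ) := by
    refine (IsEquivalent.refl.add_isLittleO ?_).congr_left
      (Eventually.of_forall fun u => add_comm _ _)
    exact isLittleO_const_left.2
      (Or.inr (tendsto_norm_atTop_atTop.congr fun u => (norm_real u).symm))
  have hnorm : (fun u : ℝ => ‖c + u‖) =Θ[atTop] fun u => u := by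
    refine hequiv.isTheta.norm_left.norm_right.trans_eventuallyEq ?_
    filter_upwards [eventually_ge_atTop 0] with u hu
    simp [abs_of_nonneg hu]
  exact (isBigO_cpow_rpow isBoundedUnder_const).trans
    (hnorm.rpow (Eventually.of_forall fun _ => norm_nonneg _) (eventually_ge_atTop 0)).isBigO

theorem integrableOn_Ioi_cexp_neg_mul_mul_cpow {c : ℂ} (hc : c ∈ slitPlane) {x : ℝ}
    (hx : 0 < x) (b : ℂ) :
    IntegrableOn (fun u : ℝ => cexp (-x * (c + u)) * (c + u) ^ b) (Ioi 0) := by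
  have hslit : ∀ u ∈ Ici (0 : ℝ), c + u ∈ slitPlane := by
    intro u hu
    rcases mem_slitPlane_iff.1 hc with hre | him
    · refine mem_slitPlane_iff.2 (Or.inl ?_)
      simp only [add_re, ofReal_re]
      linarith [mem_Ici.1 hu]
    · exact mem_slitPlane_iff.2 (Or.inr (by simpa using him))
  have hcont : ContinuousOn (fun u : ℝ => cexp (-x * (c + u)) * (c + u) ^ b) (Ici 0) :=
    (Continuous.continuousOn (by fun_prop)).mul (ContinuousOn.cpow_const (by fun_prop) hslit)
  have hexp : (fun u : ℝ => cexp (-x * (c + u))) =O[atTop] fun u => Real.exp (-x * u) := by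
    refine IsBigO.of_bound (Real.exp (-x * c.re)) (Eventually.of_forall fun u => ?_)
    rw [norm_exp, Real.norm_eq_abs, Real.abs_exp, ← Real.exp_add]
    simp [mul_add]
  have hpow : (fun u : ℝ => u ^ b.re) =O[atTop] fun u => Real.exp (x / 2 * u) :=
    (isLittleO_rpow_exp_pos_mul_atTop _ (half_pos hx)).isBigO
  have hdecay : (fun u : ℝ => cexp (-x * (c + u)) * (c + u) ^ b) =O[atTop]
      fun u => Real.exp (-(x / 2) * u) := by
    refine (hexp.mul ((isBigO_const_add_ofReal_cpow_atTop c b).trans hpow)).congr_right fun u => ?_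
    rw [← Real.exp_add]
    ring_nf
  exact (integrable_norm_iff ((hcont.mono Ioi_subset_Ici_self).aestronglyMeasurable
    measurableSet_Ioi)).1 (integrable_of_isBigO_exp_neg (half_pos hx) hcont.norm hdecay.norm_left)

theorem integrableOn_Ioi_cexp_neg_mul_mul_bdd_mul_cpow {c : ℂ} (hc : c ∈ slitPlane) {x : ℝ}
    (hx : 0 < x) (b : ℂ) {h : ℝ → ℂ} (hh : AEStronglyMeasurable h (volume.restrict (Ioi 0)))
    {C : ℝ} (hC : ∀ u, ‖h u‖ ≤ C) :
    IntegrableOn (fun u : ℝ => cexp (-x * (c + u)) * h u * (c + u) ^ b) (Ioi 0) :=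
  ((integrableOn_Ioi_cexp_neg_mul_mul_cpow hc hx b).bdd_mul hh (ae_of_all _ hC)).congr
    (ae_of_all _ fun _ => by ring)

end Complex

theorem ray_integral_eq_lerch_general (f : ℂ → ℂ)
    (hf_hol : DifferentiableOn ℂ f {z : ℂ | 0 < z.im})
    (hper : ∀ z : ℂ, 0 < z.im → f (z + 1) = f z)
    (x s : ℝ) (hx : 0 < x) (N : ℕ) (hN : 1 ≤ N) :
    (∫ u in Ioi (0:ℝ),
        Complex.exp (-(x:ℂ) * (Complex.I / Real.sqrt N + u)) *
          f (Complex.I / Real.sqrt N + u) *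
          (Complex.I / Real.sqrt N + (u:ℂ)) ^ ((s:ℂ) - 1))
      = ∫ u in (0:ℝ)..1,
          Complex.exp (-(x:ℂ) * (Complex.I / Real.sqrt N + u)) *
            f (Complex.I / Real.sqrt N + u) *
            ∑' m : ℕ, Complex.exp (2 * Real.pi * Complex.I * m *
                (Complex.I * x / (2 * Real.pi))) *
              (Complex.I / Real.sqrt N + (u:ℂ) + m) ^ (-(1 - (s:ℂ))) := by
  set c : ℂ := I / Real.sqrt N
  have hc : 0 < c.im := by
    simpa [c, div_ofReal_im] using Real.sqrt_pos.2 (show (0 : ℝ) < N by exact_mod_cast hN)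
  have hline : ∀ u : ℝ, 0 < (c + u).im := by simpa using hc
  have hperiodic : Periodic (fun u : ℝ => f (c + u)) 1 := fun u => by
    simpa [add_assoc] using hper (c + u) (hline u)
  have hcont : Continuous fun u : ℝ => f (c + u) :=
    hf_hol.continuousOn.comp_continuous (by fun_prop) hline
  obtain ⟨C, hC⟩ :=
    isBounded_iff_forall_norm_le.1 (hperiodic.isBounded_of_continuous one_ne_zero hcont)
  have hint := integrableOn_Ioi_cexp_neg_mul_mul_bdd_mul_cpow
    (mem_slitPlane_iff.2 (Or.inr hc.ne')) hx (s - 1) hcont.aestronglyMeasurable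
    (forall_mem_range.1 hC)
  have hphase (m : ℕ) : 2 * (Real.pi : ℂ) * I * m * (I * x / (2 * Real.pi)) = -x * m := by
    field_simp
    linear_combination (m * x : ℂ) * I_sq
  rw [hint.integral_Ioi_eq_intervalIntegral_tsum_comp_add_nat]
  refine intervalIntegral.integral_congr fun u _ => ?_
  rw [← tsum_mul_left]
  refine tsum_congr fun m => ?_
  have hshift : f (c + ↑(u + m)) = f (c + u) := by simpa using hperiodic.nat_mul m u
  rw [hshift, hphase]
  push_cast
  rw [← add_assoc, neg_sub, mul_add (-(x : ℂ)) (c + u), exp_add]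
  ring

/-- Folding a ray integral into a period integral against the Lerch zeta function:
`∫_{i/√N}^{i/√N+∞} e^{−xz} f(z) z^{s−1} dz
  = ∫_{i/√N}^{i/√N+1} e^{−xz} f(z) ζ(1−s, ix/(2π), z) dz`,
where `ζ(s,a,z) = ∑_{m≥0} e^{2πima}(z+m)^{−s}` is the Lerch zeta function. -/
theorem ray_integral_eq_lerch (f : ℂ → ℂ) (n₀ : ℕ) (a : ℤ → ℂ)
    (hf_hol : DifferentiableOn ℂ f {z : ℂ | 0 < z.im})
    (hper : ∀ z : ℂ, 0 < z.im → f (z + 1) = f z)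
    (hcut : ∀ n : ℤ, n < -(n₀:ℤ) → a n = 0) (ha0 : a 0 = 0)
    (habs : ∀ z : ℂ, 0 < z.im →
      Summable (fun n : ℤ => ‖a n * Complex.exp (2 * Real.pi * Complex.I * n * z)‖))
    (hsum : ∀ z : ℂ, 0 < z.im →
      HasSum (fun n : ℤ => a n * Complex.exp (2 * Real.pi * Complex.I * n * z)) (f z))
    (x s : ℝ) (hx : 0 < x) (N : ℕ) (hN : 1 ≤ N) :
    (∫ u in Ioi (0:ℝ),
        Complex.exp (-(x:ℂ) * (Complex.I / Real.sqrt N + u)) *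
          f (Complex.I / Real.sqrt N + u) *
          (Complex.I / Real.sqrt N + (u:ℂ)) ^ ((s:ℂ) - 1))
      = ∫ u in (0:ℝ)..1,
          Complex.exp (-(x:ℂ) * (Complex.I / Real.sqrt N + u)) *
            f (Complex.I / Real.sqrt N + u) *
            ∑' m : ℕ, Complex.exp (2 * Real.pi * Complex.I * m *
                (Complex.I * x / (2 * Real.pi))) *
              (Complex.I / Real.sqrt N + (u:ℂ) + m) ^ (-(1 - (s:ℂ))) :=
  ray_integral_eq_lerch_general f hf_hol hper x s hx N hN
end

section
/- Let f be a holomorphic cusp form of weight k ∈ 2N for Γ₀(N) with Fourier expansion f(z) = ∑_{n>0} a(n) e^{2πinz}, satisfying f|_k W_N = f for W_N = [[0, −1/√N],[√N, 0]]. Then for all s ∈ C, the completed L-function satisfies L*_f(s) := (√N/(2π))^s Γ(s) L_f(s) = ∑_{n>0} a(n) E_{1−s}(2πn/√N) + i^k ∑_{n>0} a(n) E_{s−k+1}(2πn/√N), and both series converge absolutely. -/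
/-!
Hecke's argument. On the imaginary axis, `g t = f (i t / √N) = ∑ a(n) exp (-2πnt/√N)`, and
termwise integration identifies the Mellin transform of `g` with `Λ s` for `Re s` large. The
Fricke relation reads `g (1/t) = i^k t^k g t`, so substituting `t ↦ 1/t` on `(0, 1)` splits that
Mellin transform as `M s + i^k M (k - s)`, where `M` is the Mellin transform of `g` cut off to
`(1, ∞)`. Exponential decay of `g` makes `M` entire, with `M s = ∑ a(n) E_{1-s}(2πn/√N)`
absolutely convergent, and the identity extends to all `s` by analytic continuation.
-/

open scoped Real
open Complex MeasureTheory Set Filter Asymptotics Topology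

noncomputable def expIntegralE (p : ℂ) (x : ℝ) : ℂ :=
  ∫ t in Ioi (1 : ℝ), cexp (-(x : ℂ) * t) * (t : ℂ) ^ (-p)

section ExpIntegral

lemma norm_cexp_neg_mul_mul_cpow (b : ℝ) (w : ℂ) {t : ℝ} (ht : 0 < t) :
    ‖cexp (-(b : ℂ) * t) * (t : ℂ) ^ w‖ = rexp (-b * t) * t ^ w.re := by
  rw [norm_mul, norm_exp, norm_cpow_eq_rpow_re_of_pos ht, ← ofReal_neg, ← ofReal_mul, ofReal_re]

lemma integrableOn_Ioi_one_exp_neg_mul_mul_rpow {b : ℝ} (hb : 0 < b) (σ : ℝ) :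
    IntegrableOn (fun t : ℝ => rexp (-b * t) * t ^ σ) (Ioi 1) := by
  have hcont : ContinuousOn (fun t : ℝ => rexp (-b * t) * t ^ σ) (Ici 1) := fun t ht =>
    ((by fun_prop : Continuous fun t : ℝ => rexp (-b * t)).continuousAt.mul
      (Real.continuousAt_rpow_const t σ (Or.inl (by linarith [mem_Ici.1 ht])))).continuousWithinAt
  -- `t ^ σ = o(exp (b t / 2))` leaves the decay rate `b / 2`
  have hdecay : (fun t : ℝ => rexp (-b * t) * t ^ σ) =O[atTop] fun t => rexp (-(b / 2) * t) := by
    refine ((isBigO_refl (fun t : ℝ => rexp (-b * t)) atTop).mul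
      (isLittleO_rpow_exp_pos_mul_atTop σ (half_pos hb)).isBigO).congr_right fun t => ?_
    rw [← Real.exp_add]
    ring_nf
  exact integrable_of_isBigO_exp_neg (half_pos hb) hcont hdecay

lemma integrableOn_Ioi_one_cexp_neg_mul_mul_cpow {b : ℝ} (hb : 0 < b) (w : ℂ) :
    IntegrableOn (fun t : ℝ => cexp (-(b : ℂ) * t) * (t : ℂ) ^ w) (Ioi 1) := by
  refine (integrableOn_Ioi_one_exp_neg_mul_mul_rpow hb w.re).mono' ?_ ?_
  · refine ContinuousOn.aestronglyMeasurable (fun t ht => ?_) measurableSet_Ioi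
    exact ((by fun_prop : Continuous fun t : ℝ => cexp (-(b : ℂ) * t)).continuousAt.mul
      (continuousAt_ofReal_cpow_const t w (Or.inr (by linarith [mem_Ioi.1 ht])))).continuousWithinAt
  · filter_upwards [ae_restrict_mem measurableSet_Ioi] with t ht
    rw [norm_cexp_neg_mul_mul_cpow b w (one_pos.trans ht)]

lemma exists_integral_norm_cexp_neg_mul_mul_cpow_le {c : ℝ} (hc : 0 < c) (w : ℂ) :
    ∃ M, ∀ b, c ≤ b →
      ∫ t in Ioi (1 : ℝ), ‖cexp (-(b : ℂ) * t) * (t : ℂ) ^ w‖ ≤ M * rexp (-b) := by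
  refine ⟨rexp c * ∫ t in Ioi (1 : ℝ), rexp (-c * t) * t ^ w.re, fun b hcb => ?_⟩
  calc ∫ t in Ioi (1 : ℝ), ‖cexp (-(b : ℂ) * t) * (t : ℂ) ^ w‖
      ≤ ∫ t in Ioi (1 : ℝ), rexp c * rexp (-b) * (rexp (-c * t) * t ^ w.re) := by
        refine setIntegral_mono_on (integrableOn_Ioi_one_cexp_neg_mul_mul_cpow
          (hc.trans_le hcb) w).norm ((integrableOn_Ioi_one_exp_neg_mul_mul_rpow hc _).const_mul _)
          measurableSet_Ioi fun t ht => ?_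
        have ht1 : 1 < t := ht
        -- for `t ≥ 1` and `b ≥ c`: `exp (-b t) ≤ exp c · exp (-b) · exp (-c t)`
        rw [norm_cexp_neg_mul_mul_cpow b w (one_pos.trans ht1), ← mul_assoc,
          ← Real.exp_add, ← Real.exp_add]
        gcongr
        nlinarith
    _ = (rexp c * ∫ t in Ioi (1 : ℝ), rexp (-c * t) * t ^ w.re) * rexp (-b) := by
        rw [integral_const_mul]
        ring

lemma exists_norm_expIntegralE_le {c : ℝ} (hc : 0 < c) (p : ℂ) :
    ∃ M, ∀ b, c ≤ b → ‖expIntegralE p b‖ ≤ M * rexp (-b) := by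
  obtain ⟨M, hM⟩ := exists_integral_norm_cexp_neg_mul_mul_cpow_le hc (-p)
  exact ⟨M, fun b hcb => (norm_integral_le_integral_norm _).trans (hM b hcb)⟩

end ExpIntegral

section ExpSeries

variable {a : ℕ → ℂ} {m : ℕ} {c : ℝ} {g : ℝ → ℂ}

lemma summable_norm_mul_exp_neg_mul (ha : a =O[atTop] fun n : ℕ => (n : ℝ) ^ m) {x : ℝ}
    (hx : 0 < x) : Summable fun n : ℕ => ‖a n‖ * rexp (-x * n) :=
  summable_of_isBigO_nat (Real.summable_pow_mul_exp_neg_nat_mul m hx)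
    (ha.norm_left.mul (isBigO_refl _ _))

lemma isBigO_exp_neg_of_hasSum (ha0 : a 0 = 0) (ha : a =O[atTop] fun n : ℕ => (n : ℝ) ^ m)
    (hc : 0 < c) (hg : ∀ t ∈ Ioi 0, HasSum (fun n : ℕ => a n * rexp (-(c * n) * t)) (g t)) :
    g =O[atTop] fun t => rexp (-c * t) := by
  have hsum : ∀ t, 0 < t → Summable fun n : ℕ => ‖a n‖ * rexp (-(c * n) * t) := fun t ht =>
    (summable_norm_mul_exp_neg_mul ha (mul_pos hc ht)).congr fun n => by ring_nf
  refine IsBigO.of_bound (rexp c * ∑' n : ℕ, ‖a n‖ * rexp (-(c * n) * 1)) ?_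
  filter_upwards [eventually_ge_atTop 1] with t ht
  -- termwise, `exp (-c n t) ≤ exp (-c n) · exp c · exp (-c t)` for `n, t ≥ 1`
  have hterm : ∀ n : ℕ, ‖a n‖ * rexp (-(c * n) * t) ≤
      ‖a n‖ * rexp (-(c * n) * 1) * (rexp c * rexp (-c * t)) := fun n => by
    rcases Nat.eq_zero_or_pos n with rfl | hn
    · simp [ha0]
    rw [mul_assoc, ← Real.exp_add, ← Real.exp_add]
    have hn1 : (1 : ℝ) ≤ n := Nat.one_le_cast.2 hn
    gcongr
    nlinarith [mul_nonneg (mul_nonneg hc.le (sub_nonneg.2 hn1)) (sub_nonneg.2 ht)]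
  calc ‖g t‖ = ‖∑' n : ℕ, a n * (rexp (-(c * n) * t) : ℂ)‖ := by
        rw [(hg t (one_pos.trans_le ht)).tsum_eq]
    _ ≤ ∑' n : ℕ, ‖a n‖ * rexp (-(c * n) * t) := by
        refine (norm_tsum_le_tsum_norm ?_).trans_eq ?_ <;>
        simp only [norm_mul, norm_real, Real.norm_eq_abs, Real.abs_exp]
        exact hsum t (one_pos.trans_le ht)
    _ ≤ ∑' n : ℕ, ‖a n‖ * rexp (-(c * n) * 1) * (rexp c * rexp (-c * t)) :=
        (hsum t (one_pos.trans_le ht)).tsum_le_tsum hterm ((hsum 1 one_pos).mul_right _)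
    _ = rexp c * (∑' n : ℕ, ‖a n‖ * rexp (-(c * n) * 1)) * ‖rexp (-c * t)‖ := by
        rw [tsum_mul_right, Real.norm_eq_abs, Real.abs_exp]
        ring

lemma summable_norm_mul_expIntegralE (ha : a =O[atTop] fun n : ℕ => (n : ℝ) ^ m) (hc : 0 < c)
    (p : ℂ) : Summable fun n : ℕ => ‖a n * expIntegralE p (c * n)‖ := by
  obtain ⟨M, hM⟩ := exists_norm_expIntegralE_le hc p
  refine Summable.of_norm_bounded_eventually_nat
    ((summable_norm_mul_exp_neg_mul ha hc).mul_left M) ?_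
  filter_upwards [eventually_ge_atTop 1] with n hn
  have hcn : c ≤ c * n := le_mul_of_one_le_right hc.le (Nat.one_le_cast.2 hn)
  rw [norm_norm, norm_mul, neg_mul, mul_left_comm]
  exact mul_le_mul_of_nonneg_left (hM _ hcn) (norm_nonneg _)

lemma hasSum_mellin_indicator_Ioi_one (ha0 : a 0 = 0)
    (ha : a =O[atTop] fun n : ℕ => (n : ℝ) ^ m) (hc : 0 < c)
    (hg : ∀ t ∈ Ioi 0, HasSum (fun n : ℕ => a n * rexp (-(c * n) * t)) (g t)) (w : ℂ) :
    HasSum (fun n : ℕ => a n * expIntegralE (1 - w) (c * n)) (mellin ((Ioi 1).indicator g) w) := by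
  set F : ℕ → ℝ → ℂ := fun n t => a n * (cexp (-((c * n : ℝ) : ℂ) * t) * (t : ℂ) ^ (w - 1))
  have hF_int : ∀ n, IntegrableOn (F n) (Ioi 1) := fun n => by
    rcases Nat.eq_zero_or_pos n with rfl | hn
    · simp [F, ha0]
    exact (integrableOn_Ioi_one_cexp_neg_mul_mul_cpow (by positivity) _).const_mul _
  have hF_sum : Summable fun n => ∫ t in Ioi (1 : ℝ), ‖F n t‖ := by
    obtain ⟨M, hM⟩ := exists_integral_norm_cexp_neg_mul_mul_cpow_le hc (w - 1)
    refine Summable.of_norm_bounded_eventually_nat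
      ((summable_norm_mul_exp_neg_mul ha hc).mul_left M) ?_
    filter_upwards [eventually_ge_atTop 1] with n hn
    have hcn : c ≤ c * n := le_mul_of_one_le_right hc.le (Nat.one_le_cast.2 hn)
    simp only [F, norm_mul (a n), integral_const_mul]
    rw [Real.norm_of_nonneg (by positivity), neg_mul, mul_left_comm]
    exact mul_le_mul_of_nonneg_left (hM _ hcn) (norm_nonneg _)
  have hmellin : mellin ((Ioi 1).indicator g) w = ∫ t in Ioi (1 : ℝ), ∑' n, F n t := by
    rw [mellin, ← integral_indicator measurableSet_Ioi, ← integral_indicator measurableSet_Ioi]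
    congr 1 with t
    by_cases ht : t ∈ Ioi (1 : ℝ)
    · have ht0 : t ∈ Ioi (0 : ℝ) := one_pos.trans (mem_Ioi.1 ht)
      rw [indicator_of_mem ht0, indicator_of_mem ht, indicator_of_mem ht, smul_eq_mul,
        ← ((hg t ht0).mul_left _).tsum_eq]
      refine tsum_congr fun n => ?_
      simp only [F, ofReal_exp]
      push_cast
      ring
    · simp [indicator_of_notMem ht]
  rw [hmellin]
  refine (hasSum_integral_of_summable_integral_norm hF_int hF_sum).congr_fun fun n => ?_
  simp only [F, expIntegralE, neg_sub, integral_const_mul]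

lemma mellin_eq_cpow_mul_Gamma_mul_tsum (ha0 : a 0 = 0)
    (ha : a =O[atTop] fun n : ℕ => (n : ℝ) ^ m) (hc : 0 < c)
    (hg : ∀ t ∈ Ioi 0, HasSum (fun n : ℕ => a n * rexp (-(c * n) * t)) (g t))
    {s : ℂ} (hs : m + 1 < s.re) :
    mellin g s = ((c⁻¹ : ℝ) : ℂ) ^ s * Gamma s * ∑' n : ℕ, a n * (n : ℂ) ^ (-s) := by
  have hσ : 0 < s.re := by linarith [(Nat.cast_nonneg m : (0 : ℝ) ≤ m)]
  have hp : ∀ n : ℕ, a n = 0 ∨ 0 < c * n := fun n => by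
    rcases Nat.eq_zero_or_pos n with rfl | hn
    · exact Or.inl ha0
    · exact Or.inr (by positivity)
  have hsum : Summable fun n : ℕ => ‖a n‖ / (c * n) ^ s.re := by
    have hbound : (fun n : ℕ => ‖a n‖ / (n : ℝ) ^ s.re) =O[atTop]
        fun n : ℕ => (n : ℝ) ^ ((m : ℝ) - s.re) := by
      refine (ha.norm_left.mul (isBigO_refl (fun n : ℕ => ((n : ℝ) ^ s.re)⁻¹) _)).congr
        (fun n => by rw [div_eq_mul_inv]) fun n => ?_
      rw [Real.rpow_sub' (Nat.cast_nonneg _) (by linarith), Real.rpow_natCast, div_eq_mul_inv]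
    refine ((summable_of_isBigO_nat (Real.summable_nat_rpow.2 (by linarith)) hbound).div_const
      (c ^ s.re)).congr fun n => ?_
    rw [Real.mul_rpow hc.le (Nat.cast_nonneg _), div_div, mul_comm]
  rw [← (hasSum_mellin hp hσ hg hsum).tsum_eq, ← tsum_mul_left]
  refine tsum_congr fun n => ?_
  rcases Nat.eq_zero_or_pos n with rfl | hn
  · simp [ha0]
  have hc' : ((c⁻¹ : ℝ) : ℂ) ^ s ≠ 0 :=
    cpow_ne_zero_iff.2 (Or.inl (ofReal_ne_zero.2 (inv_ne_zero hc.ne')))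
  have hsplit : ((c⁻¹ : ℝ) : ℂ) ^ s * ((c * n : ℝ) : ℂ) ^ s = (n : ℂ) ^ s := by
    rw [← mul_cpow_ofReal_nonneg (inv_nonneg.2 hc.le) (by positivity), ← ofReal_mul,
      inv_mul_cancel_left₀ hc.ne', ofReal_natCast]
  rw [cpow_neg, ← hsplit, mul_inv, div_eq_mul_inv]
  linear_combination (Gamma s * a n * (((c * n : ℝ) : ℂ) ^ s)⁻¹) * (mul_inv_cancel₀ hc').symm

end ExpSeries

section FunctionalEquation

variable {g : ℝ → ℂ} {c : ℝ}

lemma locallyIntegrableOn_indicator_Ioi_one (hg : LocallyIntegrableOn g (Ioi 0)) :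
    LocallyIntegrableOn ((Ioi 1).indicator g) (Ioi 0) := by
  rw [locallyIntegrableOn_iff isOpen_Ioi.isLocallyClosed] at hg ⊢
  intro K hK hKc
  exact (hg K hK hKc).indicator measurableSet_Ioi

lemma indicator_Ioi_one_isBigO_nhdsGT_zero (g : ℝ → ℂ) (b : ℝ) :
    (Ioi 1).indicator g =O[𝓝[>] 0] fun t => t ^ (-b) := by
  refine (isBigO_zero _ _).congr' ?_ EventuallyEq.rfl
  filter_upwards [Ioo_mem_nhdsGT one_pos] with t ht
  exact (indicator_of_notMem (not_lt.2 ht.2.le) _).symm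

lemma indicator_Ioi_one_isBigO_atTop (hg_top : g =O[atTop] fun t => rexp (-c * t)) :
    (Ioi 1).indicator g =O[atTop] fun t => rexp (-c * t) := by
  refine hg_top.congr' ?_ EventuallyEq.rfl
  filter_upwards [eventually_gt_atTop 1] with t ht
  exact (indicator_of_mem ht _).symm

lemma isBigO_nhdsGT_zero_of_feq (hc : 0 ≤ c) (hg_top : g =O[atTop] fun t => rexp (-c * t))
    {ε : ℂ} {k : ℕ} (hfeq : ∀ t ∈ Ioi 0, g t⁻¹ = ε * (t : ℂ) ^ k * g t) :
    g =O[𝓝[>] 0] fun t => t ^ (-(k : ℝ)) := by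
  have hbdd : (fun t => g t⁻¹) =O[𝓝[>] 0] fun _ => (1 : ℝ) := by
    refine (hg_top.comp_tendsto tendsto_inv_nhdsGT_zero).trans (IsBigO.of_bound 1 ?_)
    filter_upwards [self_mem_nhdsWithin] with t (ht : 0 < t)
    rw [Function.comp_apply, Real.norm_of_nonneg (Real.exp_pos _).le, norm_one, one_mul,
      Real.exp_le_one_iff, neg_mul]
    exact neg_nonpos.2 (by positivity)
  have hpow : (fun t : ℝ => ε * ((t⁻¹ : ℝ) : ℂ) ^ k) =O[𝓝[>] 0] fun t => t ^ (-(k : ℝ)) := by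
    refine IsBigO.of_bound ‖ε‖ ?_
    filter_upwards [self_mem_nhdsWithin] with t (ht : 0 < t)
    rw [norm_mul, norm_pow, norm_real, Real.norm_of_nonneg (inv_pos.2 ht).le,
      Real.norm_of_nonneg (by positivity), Real.rpow_neg ht.le, Real.rpow_natCast, inv_pow]
  refine (hpow.mul hbdd).congr' ?_ (by simp only [mul_one]; rfl)
  filter_upwards [self_mem_nhdsWithin] with t (ht : 0 < t)
  simpa only [inv_inv] using (hfeq t⁻¹ (inv_pos.2 ht)).symm

lemma sub_indicator_Ioi_one_inv_of_feq {ε : ℂ} {k : ℕ}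
    (hfeq : ∀ t ∈ Ioi 0, g t⁻¹ = ε * (t : ℂ) ^ k * g t) {t : ℝ} (ht : 0 < t) (ht1 : t ≠ 1) :
    g t⁻¹ - (Ioi 1).indicator g t⁻¹ = ε • (t : ℂ) ^ (k : ℂ) • (Ioi 1).indicator g t := by
  rw [cpow_natCast, smul_eq_mul, smul_eq_mul]
  rcases ht1.lt_or_gt with ht1 | ht1
  · rw [indicator_of_mem (show t⁻¹ ∈ Ioi 1 from one_lt_inv₀ ht |>.2 ht1),
      indicator_of_notMem (show t ∉ Ioi 1 from not_lt.2 ht1.le)]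
    ring
  · rw [indicator_of_notMem (show t⁻¹ ∉ Ioi 1 from not_lt.2 (inv_le_one_of_one_le₀ ht1.le)),
      indicator_of_mem (show t ∈ Ioi 1 from ht1), hfeq t ht]
    ring

variable (hc : 0 < c) (hg_int : LocallyIntegrableOn g (Ioi 0))
  (hg_top : g =O[atTop] fun t => rexp (-c * t))
include hc hg_int hg_top

lemma mellinConvergent_indicator_Ioi_one (s : ℂ) : MellinConvergent ((Ioi 1).indicator g) s :=
  mellinConvergent_of_isBigO_rpow_exp hc (locallyIntegrableOn_indicator_Ioi_one hg_int)
    (indicator_Ioi_one_isBigO_atTop hg_top) (indicator_Ioi_one_isBigO_nhdsGT_zero g _)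
    (sub_one_lt s.re)

lemma differentiable_mellin_indicator_Ioi_one : Differentiable ℂ (mellin ((Ioi 1).indicator g)) :=
  fun s => mellin_differentiableAt_of_isBigO_rpow_exp hc
    (locallyIntegrableOn_indicator_Ioi_one hg_int) (indicator_Ioi_one_isBigO_atTop hg_top)
    (indicator_Ioi_one_isBigO_nhdsGT_zero g _) (sub_one_lt s.re)

variable {ε : ℂ} {k : ℕ} (hfeq : ∀ t ∈ Ioi 0, g t⁻¹ = ε * (t : ℂ) ^ k * g t)
include hfeq

lemma mellinConvergent_of_feq {s : ℂ} (hs : k < s.re) : MellinConvergent g s :=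
  mellinConvergent_of_isBigO_rpow_exp hc hg_int hg_top
    (isBigO_nhdsGT_zero_of_feq hc.le hg_top hfeq) hs

lemma mellin_eq_mellin_indicator_add_of_feq {s : ℂ} (hs : MellinConvergent g s) :
    mellin g s = mellin ((Ioi 1).indicator g) s + ε * mellin ((Ioi 1).indicator g) (k - s) := by
  set F := (Ioi 1).indicator g
  -- substituting `t ↦ t⁻¹` turns the integral of `g - F` over `(0, 1)` into one over `(1, ∞)`
  have hsmall : mellin (fun t => g t - F t) s = ε * mellin F (k - s) := by
    have hinv := mellin_comp_inv (fun t => g t - F t) (-s)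
    rw [neg_neg] at hinv
    rw [← hinv, show (k : ℂ) - s = -s + k by ring, ← mellin_cpow_smul, ← smul_eq_mul,
      ← mellin_const_smul]
    refine setIntegral_congr_ae measurableSet_Ioi ?_
    filter_upwards [Measure.ae_ne volume 1] with t ht1 (ht : 0 < t)
    rw [sub_indicator_Ioi_one_inv_of_feq hfeq ht ht1]
  rw [← sub_eq_iff_eq_add', ← hsmall,
    (hasMellin_sub hs (mellinConvergent_indicator_Ioi_one hc hg_int hg_top s)).2]

end FunctionalEquation

lemma Differentiable.eq_of_eqOn_re_gt {F G : ℂ → ℂ} (hF : Differentiable ℂ F)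
    (hG : Differentiable ℂ G) {σ : ℝ} (h : EqOn F G {s | σ < s.re}) : F = G :=
  (analyticOnNhd_univ_iff_differentiable.2 hF).eq_of_eventuallyEq
    (analyticOnNhd_univ_iff_differentiable.2 hG) (eventually_of_mem
      ((isOpen_lt continuous_const continuous_re).mem_nhds
        (show ((σ + 1 : ℝ) : ℂ) ∈ {s : ℂ | σ < s.re} by simp)) h)

lemma hasSum_exp_of_hasSum_qExpansion {f : ℂ → ℂ} {a : ℕ → ℂ}
    (hsum : ∀ z : ℂ, 0 < z.im → HasSum (fun n : ℕ => a n * cexp (2 * π * I * n * z)) (f z))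
    {r : ℝ} (hr : 0 < r) {t : ℝ} (ht : 0 < t) :
    HasSum (fun n : ℕ => a n * rexp (-(2 * π / r * n) * t)) (f ((t / r : ℝ) * I)) := by
  convert hsum ((t / r : ℝ) * I) (by simpa using div_pos ht hr) using 3 with n
  rw [ofReal_exp]
  congr 1
  push_cast
  field_simp
  rw [I_sq]
  ring

lemma apply_inv_div_sqrt_mul_I_of_fricke {N k : ℕ} (hN : 1 ≤ N) (hk : Even k) {f : ℂ → ℂ}
    (hFricke : ∀ z : ℂ, 0 < z.im → f (-1 / (N * z)) = (N : ℂ) ^ (k / 2) * z ^ k * f z)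
    {t : ℝ} (ht : 0 < t) :
    f ((t⁻¹ / √N : ℝ) * I) = I ^ k * (t : ℂ) ^ k * f ((t / √N : ℝ) * I) := by
  have hrtN : 0 < √(N : ℝ) := Real.sqrt_pos.2 (by exact_mod_cast hN)
  have hsq : ((√N : ℝ) : ℂ) ^ 2 = N := by
    rw [← ofReal_pow, Real.sq_sqrt (Nat.cast_nonneg _), ofReal_natCast]
  have hrtN' : ((√N : ℝ) : ℂ) ≠ 0 := ofReal_ne_zero.2 hrtN.ne'
  have ht' : (t : ℂ) ≠ 0 := ofReal_ne_zero.2 ht.ne'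
  have harg : -1 / (N * ((t / √N : ℝ) * I)) = ((t⁻¹ / √N : ℝ) : ℂ) * I := by
    rw [← hsq]
    push_cast
    field_simp
    linear_combination -I_sq
  have hcoeff : (N : ℂ) ^ (k / 2) * (((t / √N : ℝ) : ℂ) * I) ^ k = I ^ k * (t : ℂ) ^ k := by
    rw [← hsq, ← pow_mul, Nat.two_mul_div_two_of_even hk, ← mul_pow, ← mul_pow]
    congr 1
    push_cast
    field_simp
  rw [← harg, hFricke _ (by simpa using div_pos ht hrtN), hcoeff]

lemma eq_tsum_expIntegralE_add_tsum_of_feq {a : ℕ → ℂ} {m : ℕ} {c : ℝ} {g : ℝ → ℂ}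
    (ha0 : a 0 = 0) (ha : a =O[atTop] fun n : ℕ => (n : ℝ) ^ m) (hc : 0 < c)
    (hg : ∀ t ∈ Ioi 0, HasSum (fun n : ℕ => a n * rexp (-(c * n) * t)) (g t))
    (hg_int : LocallyIntegrableOn g (Ioi 0)) {ε : ℂ} {k : ℕ}
    (hfeq : ∀ t ∈ Ioi 0, g t⁻¹ = ε * (t : ℂ) ^ k * g t) {Λ : ℂ → ℂ} (hΛ : Differentiable ℂ Λ)
    {σ : ℝ} (hΛ_eq : ∀ s : ℂ, σ < s.re →
      Λ s = ((c⁻¹ : ℝ) : ℂ) ^ s * Gamma s * ∑' n : ℕ, a n * (n : ℂ) ^ (-s)) :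
    Λ = fun s => ∑' n : ℕ, a n * expIntegralE (1 - s) (c * n) +
      ε * ∑' n : ℕ, a n * expIntegralE (1 - (k - s)) (c * n) := by
  have hg_top := isBigO_exp_neg_of_hasSum ha0 ha hc hg
  have hM := differentiable_mellin_indicator_Ioi_one hc hg_int hg_top
  have hM_eq (w : ℂ) := (hasSum_mellin_indicator_Ioi_one ha0 ha hc hg w).tsum_eq
  simp only [hM_eq]
  refine hΛ.eq_of_eqOn_re_gt (hM.add ((hM.comp ((differentiable_const _).sub
    differentiable_id)).const_mul _)) (σ := max σ (k + m + 1)) fun s hs => ?_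
  have hσ : σ < s.re := (le_max_left _ _).trans_lt hs
  have hkm : (k : ℝ) + m + 1 < s.re := (le_max_right _ _).trans_lt hs
  rw [hΛ_eq s hσ, ← mellin_eq_cpow_mul_Gamma_mul_tsum ha0 ha hc hg (by linarith),
    mellin_eq_mellin_indicator_add_of_feq hc hg_int hg_top hfeq
      (mellinConvergent_of_feq hc hg_int hg_top hfeq (by linarith))]

theorem completed_L_eq_general (N k : ℕ) (hN : 1 ≤ N) (hk : Even k)
    (f : ℂ → ℂ) (a : ℕ → ℂ) (ha0 : a 0 = 0)
    (hf_hol : DifferentiableOn ℂ f {z : ℂ | 0 < z.im})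
    (hsum : ∀ z : ℂ, 0 < z.im →
      HasSum (fun n : ℕ => a n * Complex.exp (2 * Real.pi * Complex.I * n * z)) (f z))
    (hbound : ∃ C : ℝ, ∀ n : ℕ, 1 ≤ n → ‖a n‖ ≤ C * (n : ℝ) ^ (k / 2))
    (hFricke : ∀ z : ℂ, 0 < z.im → f (-1 / (N * z)) = (N:ℂ) ^ (k / 2) * z ^ k * f z)
    (Λ : ℂ → ℂ) (hΛ_ent : Differentiable ℂ Λ)
    (hΛ_eq : ∀ s : ℂ, (k : ℝ) < s.re →
      Λ s = ((Real.sqrt N : ℂ) / (2 * (Real.pi : ℂ))) ^ s * Complex.Gamma s *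
        ∑' n : ℕ, a n * (n:ℂ) ^ (-s)) :
    ∀ s : ℂ,
      Summable (fun n : ℕ => ‖a n * ∫ t in Ioi (1:ℝ),
        Complex.exp (-((2 * Real.pi * n / Real.sqrt N : ℝ) : ℂ) * t) *
          (t:ℂ) ^ (-(1 - s))‖) ∧
      Summable (fun n : ℕ => ‖a n * ∫ t in Ioi (1:ℝ),
        Complex.exp (-((2 * Real.pi * n / Real.sqrt N : ℝ) : ℂ) * t) *
          (t:ℂ) ^ (-(s - k + 1))‖) ∧
      Λ s = (∑' n : ℕ, a n * ∫ t in Ioi (1:ℝ),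
            Complex.exp (-((2 * Real.pi * n / Real.sqrt N : ℝ) : ℂ) * t) *
              (t:ℂ) ^ (-(1 - s)))
        + Complex.I ^ k * ∑' n : ℕ, a n * ∫ t in Ioi (1:ℝ),
            Complex.exp (-((2 * Real.pi * n / Real.sqrt N : ℝ) : ℂ) * t) *
              (t:ℂ) ^ (-(s - k + 1)) := by
  obtain ⟨C, hC⟩ := hbound
  have ha : a =O[atTop] fun n : ℕ => (n : ℝ) ^ (k / 2) := IsBigO.of_bound C <| by
    filter_upwards [eventually_ge_atTop 1] with n hn
    rw [Real.norm_of_nonneg (by positivity)]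
    exact hC n hn
  have hrtN : 0 < √(N : ℝ) := Real.sqrt_pos.2 (by exact_mod_cast hN)
  set c := 2 * π / √(N : ℝ) with hc_def
  have hc : 0 < c := by positivity
  have hcinv : ((c⁻¹ : ℝ) : ℂ) = (√N : ℂ) / (2 * π) := by
    rw [hc_def, inv_div]
    push_cast
    rfl
  set g : ℝ → ℂ := fun t => f ((t / √N : ℝ) * I)
  have hg_int : LocallyIntegrableOn g (Ioi 0) :=
    (hf_hol.continuousOn.comp (by fun_prop) fun t (ht : 0 < t) => by
      simpa using div_pos ht hrtN).locallyIntegrableOn measurableSet_Ioi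
  have hΛ := eq_tsum_expIntegralE_add_tsum_of_feq ha0 ha hc
    (fun t ht => hasSum_exp_of_hasSum_qExpansion hsum hrtN ht) hg_int
    (fun t ht => apply_inv_div_sqrt_mul_I_of_fricke hN hk hFricke ht) hΛ_ent
    (fun s hs => by rw [hΛ_eq s hs, hcinv])
  intro s
  have hfreq : ∀ n : ℕ, 2 * π * n / √(N : ℝ) = c * n := fun n => by rw [hc_def]; ring
  have hdual : s - k + 1 = 1 - ((k : ℂ) - s) := by ring
  simp only [expIntegralE, hfreq, hdual] at hΛ ⊢
  refine ⟨?_, ?_, congrFun hΛ s⟩ <;>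
    simpa only [expIntegralE] using summable_norm_mul_expIntegralE ha hc _

/-- The completed `L`-function of a Fricke-invariant holomorphic cusp form of weight `k` for
`Γ₀(N)` equals, for every `s ∈ ℂ`,
`∑_{n>0} a(n) E_{1−s}(2πn/√N) + i^k ∑_{n>0} a(n) E_{s−k+1}(2πn/√N)`,
both series converging absolutely. -/
theorem completed_L_eq (N k : ℕ) (hN : 1 ≤ N) (hk : Even k) (hk0 : 0 < k)
    (f : ℂ → ℂ) (a : ℕ → ℂ) (ha0 : a 0 = 0)
    (hf_hol : DifferentiableOn ℂ f {z : ℂ | 0 < z.im})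
    (hsum : ∀ z : ℂ, 0 < z.im →
      HasSum (fun n : ℕ => a n * Complex.exp (2 * Real.pi * Complex.I * n * z)) (f z))
    (hbound : ∃ C : ℝ, ∀ n : ℕ, 1 ≤ n → ‖a n‖ ≤ C * (n : ℝ) ^ (k / 2))
    (hmod : ∀ A B c d : ℤ, A * d - (N:ℤ) * c * B = 1 → ∀ z : ℂ, 0 < z.im →
      f (((A:ℂ) * z + B) / ((N:ℂ) * c * z + d)) = ((N:ℂ) * c * z + d) ^ k * f z)
    (hFricke : ∀ z : ℂ, 0 < z.im → f (-1 / (N * z)) = (N:ℂ) ^ (k / 2) * z ^ k * f z)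
    (Λ : ℂ → ℂ) (hΛ_ent : Differentiable ℂ Λ)
    (hΛ_eq : ∀ s : ℂ, (k : ℝ) < s.re →
      Λ s = ((Real.sqrt N : ℂ) / (2 * (Real.pi : ℂ))) ^ s * Complex.Gamma s *
        ∑' n : ℕ, a n * (n:ℂ) ^ (-s)) :
    ∀ s : ℂ,
      Summable (fun n : ℕ => ‖a n * ∫ t in Ioi (1:ℝ),
        Complex.exp (-((2 * Real.pi * n / Real.sqrt N : ℝ) : ℂ) * t) *
          (t:ℂ) ^ (-(1 - s))‖) ∧
      Summable (fun n : ℕ => ‖a n * ∫ t in Ioi (1:ℝ),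
        Complex.exp (-((2 * Real.pi * n / Real.sqrt N : ℝ) : ℂ) * t) *
          (t:ℂ) ^ (-(s - k + 1))‖) ∧
      Λ s = (∑' n : ℕ, a n * ∫ t in Ioi (1:ℝ),
            Complex.exp (-((2 * Real.pi * n / Real.sqrt N : ℝ) : ℂ) * t) *
              (t:ℂ) ^ (-(1 - s)))
        + Complex.I ^ k * ∑' n : ℕ, a n * ∫ t in Ioi (1:ℝ),
            Complex.exp (-((2 * Real.pi * n / Real.sqrt N : ℝ) : ℂ) * t) *
              (t:ℂ) ^ (-(s - k + 1)) :=
  completed_L_eq_general N k hN hk f a ha0 hf_hol hsum hbound hFricke Λ hΛ_ent hΛ_eq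
end
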